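/- For μ ≥ -1/2 and each nonnegative integer n with n < μ + 1/2, the function z ↦ D_z^n(√z J_μ(z)) is bounded on (0,∞). -/

import Mathlib

open MeasureTheory Filter Set

/-- Bessel function of the first kind of order `μ`. -/
noncomputable def besselJ (μ x : ℝ) : ℝ :=
  (x / 2) ^ μ *
    ∑' n : ℕ, ((-1 : ℝ) ^ n / ((n.factorial : ℝ) * Real.Gamma (μ + n + 1))) * (x / 2) ^ (2 * n)

/-- The constant `C_{α,μ} = e^{i(1+μ)(π/2-α)}/ sin α`. -/
noncomputable def Cst (α μ : ℝ) : ℂ :=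
  Complex.exp (Complex.I * ((1 + μ) * (Real.pi / 2 - α) : ℝ)) / (Real.sin α : ℂ)

/-- The fractional Hankel transform kernel (for `α ≠ π/2`),
`K_α(x,ξ) = C_{α,μ} e^{-i(x²+ξ²)c₁/2} √(xξc₂) J_μ(xξc₂)` with `c₁ = cot α`, `c₂ = csc α`. -/
noncomputable def frhtKernel (α μ x ξ : ℝ) : ℂ :=
  Cst α μ * Complex.exp (-Complex.I * (((x ^ 2 + ξ ^ 2) / 2 * Real.cot α : ℝ) : ℂ)) *
    ((Real.sqrt (x * ξ * (Real.sin α)⁻¹) * besselJ μ (x * ξ * (Real.sin α)⁻¹) : ℝ) : ℂ)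

/-- The fractional Hankel transform of a function. -/
noncomputable def frht (α μ : ℝ) (f : ℝ → ℂ) (ξ : ℝ) : ℂ :=
  ∫ x in Set.Ioi (0 : ℝ), frhtKernel α μ x ξ * f x

/-- The classical Hankel transform of order `μ`. -/
noncomputable def hankel (μ : ℝ) (g : ℝ → ℂ) (ξ : ℝ) : ℂ :=
  ∫ x in Set.Ioi (0 : ℝ), ((Real.sqrt (x * ξ) * besselJ μ (x * ξ) : ℝ) : ℂ) * g x

/-- `H(μ,η) = Γ(1+μ/2-η/2)/(2^{η-1} Γ(μ/2+η/2))`. -/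
noncomputable def Hconst (μ η : ℝ) : ℝ :=
  Real.Gamma (1 + μ / 2 - η / 2) / (2 ^ (η - 1) * Real.Gamma (μ / 2 + η / 2))

/-- `L` is slowly varying at the origin. -/
def SlowlyVaryingAtZero (L : ℝ → ℝ) : Prop :=
  ∀ a > 0, Filter.Tendsto (fun ε => L (a * ε) / L ε) (nhdsWithin 0 (Set.Ioi 0)) (nhds 1)

/-!
Near the origin, `√z J_μ(z) = z^(μ+1/2) f(z²/4)` with `f` an everywhere convergent power
series, and each differentiation produces `z^(μ+1/2-m) f_m(z²/4)` with `f_m` again everywhere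
convergent; when `μ + 1/2 - n > 0` this is bounded on `(0, 1]`.

On `[1, ∞)`, `u(z) = √z J_μ(z)` solves `u'' = -(1 + c/z²) u` with `c = 1/4 - μ²`. The weighted
energy `(u'² + u²) e^(|c|/z)` is nonincreasing there, so `u` and `u'` are bounded, and
differentiating the equation (Leibniz rule) bounds every higher derivative by induction.
-/

open Topology Asymptotics
open scoped ContDiff

def HasInfiniteRadius (a : ℕ → ℝ) : Prop :=
  ∀ r : ℝ, 0 < r → Summable fun k => |a k| * r ^ k

noncomputable def powerSum (a : ℕ → ℝ) (w : ℝ) : ℝ := ∑' k, a k * w ^ k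

def derivCoeff (a : ℕ → ℝ) (k : ℕ) : ℝ := (k + 1) * a (k + 1)

lemma succ_mul_pow_le_two_mul_pow {r : ℝ} (hr : 0 ≤ r) (k : ℕ) :
    ((k : ℝ) + 1) * r ^ k ≤ (2 * r) ^ k := by
  rw [mul_pow]
  exact mul_le_mul_of_nonneg_right (by exact_mod_cast Nat.lt_two_pow_self) (pow_nonneg hr k)

namespace HasInfiniteRadius

variable {a : ℕ → ℝ}

lemma summable_abs (ha : HasInfiniteRadius a) (w : ℝ) : Summable fun k => |a k * w ^ k| := by
  refine .of_nonneg_of_le (fun k => abs_nonneg _) (fun k => ?_) (ha (|w| + 1) (by positivity))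
  rw [abs_mul, abs_pow]
  gcongr
  linarith

lemma summable (ha : HasInfiniteRadius a) (w : ℝ) : Summable fun k => a k * w ^ k :=
  (ha.summable_abs w).of_abs

lemma affine_mul (ha : HasInfiniteRadius a) (c d : ℝ) :
    HasInfiniteRadius fun k => (c + d * k) * a k := by
  intro r hr
  refine .of_nonneg_of_le (fun k => by positivity) (fun k => ?_)
    ((ha (2 * r) (by positivity)).mul_left (|c| + |d|))
  have hcd : |c + d * k| ≤ (|c| + |d|) * ((k : ℝ) + 1) := by
    have := abs_add_le c (d * k)
    rw [abs_mul, Nat.abs_cast] at this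
    nlinarith [abs_nonneg c, abs_nonneg d, (k.cast_nonneg : (0 : ℝ) ≤ k)]
  calc |(c + d * k) * a k| * r ^ k ≤ (|c| + |d|) * ((k : ℝ) + 1) * |a k| * r ^ k := by
        rw [abs_mul]; gcongr
    _ = (|c| + |d|) * (|a k| * (((k : ℝ) + 1) * r ^ k)) := by ring
    _ ≤ (|c| + |d|) * (|a k| * (2 * r) ^ k) := by
        gcongr; exact succ_mul_pow_le_two_mul_pow hr.le k

lemma derivCoeff (ha : HasInfiniteRadius a) : HasInfiniteRadius (derivCoeff a) := by
  intro r hr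
  refine .of_nonneg_of_le (fun k => by positivity) (fun k => ?_)
    (((summable_nat_add_iff 1).mpr (ha (2 * r) (by positivity))).mul_left (2 * r)⁻¹)
  calc |_root_.derivCoeff a k| * r ^ k = |a (k + 1)| * (((k : ℝ) + 1) * r ^ k) := by
        rw [_root_.derivCoeff, abs_mul, abs_of_pos (by positivity)]; ring
    _ ≤ |a (k + 1)| * (2 * r) ^ k := by gcongr; exact succ_mul_pow_le_two_mul_pow hr.le k
    _ = (2 * r)⁻¹ * (|a (k + 1)| * (2 * r) ^ (k + 1)) := by
        field_simp
        ring

end HasInfiniteRadius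

lemma powerSum_eq_zero_add {b : ℕ → ℝ} {w : ℝ} (hb : Summable fun k => b k * w ^ k) :
    powerSum b w = b 0 + w * powerSum (fun k => b (k + 1)) w := by
  rw [powerSum, hb.tsum_eq_zero_add, powerSum, ← tsum_mul_left]
  simp only [pow_zero, mul_one, pow_succ]
  congr 1
  exact tsum_congr fun k => by ring

lemma hasDerivAt_powerSum {a : ℕ → ℝ} (ha : HasInfiniteRadius a) (w : ℝ) :
    HasDerivAt (powerSum a) (powerSum (derivCoeff a) w) w := by
  set R := |w| + 1
  have hR : 1 ≤ R := by linarith [abs_nonneg w]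
  have hw : w ∈ Ioo (-R) R := ⟨by linarith [neg_abs_le w], by linarith [le_abs_self w]⟩
  have hbound : ∀ (k : ℕ), ∀ y ∈ Ioo (-R) R, ‖a k * (k * y ^ (k - 1))‖ ≤ |k * a k| * R ^ k := by
    intro k y hy
    rw [Real.norm_eq_abs, abs_mul, abs_mul, abs_mul, Nat.abs_cast, abs_pow]
    have hy : |y| ≤ R := abs_le.2 ⟨hy.1.le, hy.2.le⟩
    calc |a k| * (k * |y| ^ (k - 1)) ≤ |a k| * (k * R ^ (k - 1)) := by gcongr
      _ ≤ k * |a k| * R ^ k := by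
        rw [mul_left_comm, mul_assoc]; gcongr; exact k.sub_le 1
  have hsum : Summable fun k : ℕ => |k * a k| * R ^ k := by
    simpa using ha.affine_mul 0 1 R (by positivity)
  refine (hasDerivAt_tsum_of_isPreconnected hsum isOpen_Ioo (convex_Ioo _ _).isPreconnected
    (fun k y _ => (hasDerivAt_pow k y).const_mul (a k)) hbound hw (ha.summable w) hw).congr_deriv
    ?_
  rw [(Summable.of_norm_bounded hsum fun k => hbound k w hw).tsum_eq_zero_add, powerSum]
  simp only [derivCoeff, Nat.cast_zero, zero_mul, mul_zero, zero_add, Nat.add_sub_cancel,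
    Nat.cast_succ]
  exact tsum_congr fun k => by ring

lemma contDiff_powerSum {a : ℕ → ℝ} (ha : HasInfiniteRadius a) : ContDiff ℝ ∞ (powerSum a) := by
  refine contDiff_infty.2 fun n => ?_
  induction n generalizing a with
  | zero =>
    exact contDiff_zero.2 <|
      continuous_iff_continuousAt.2 fun w => (hasDerivAt_powerSum ha w).continuousAt
  | succ n ih =>
    refine (contDiff_succ_iff_deriv (n := n)).2
      ⟨fun w => (hasDerivAt_powerSum ha w).differentiableAt, by simp, ?_⟩
    rw [funext fun w => (hasDerivAt_powerSum ha w).deriv]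
    exact ih ha.derivCoeff

lemma powerSum_affine_mul {a : ℕ → ℝ} (ha : HasInfiniteRadius a) (c d w : ℝ) :
    powerSum (fun k => (c + d * k) * a k) w
      = c * powerSum a w + d * (w * powerSum (derivCoeff a) w) := by
  have hk : Summable fun k : ℕ => (k : ℝ) * a k * w ^ k := by
    simpa using (ha.affine_mul 0 1).summable w
  have hshift := powerSum_eq_zero_add hk
  simp only [Nat.cast_zero, zero_mul, zero_add, Nat.cast_succ] at hshift
  rw [show derivCoeff a = fun k : ℕ => ((k : ℝ) + 1) * a (k + 1) from rfl, ← hshift, powerSum,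
    powerSum, powerSum, ← tsum_mul_left, ← tsum_mul_left,
    ← ((ha.summable w).mul_left c).tsum_add (hk.mul_left d)]
  exact tsum_congr fun k => by ring

noncomputable def besselCoeff (μ : ℝ) (k : ℕ) : ℝ :=
  2 ^ (-μ) * ((-1) ^ k / (k.factorial * Real.Gamma (μ + k + 1)))

lemma besselCoeff_succ (μ : ℝ) (k : ℕ) :
    (k + 1) * (μ + k + 1) * besselCoeff μ (k + 1) = -besselCoeff μ k := by
  -- Mathlib's `Γ` vanishes at the poles, so both sides are `0` there.
  by_cases hμk : μ + k + 1 = 0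
  · simp [besselCoeff, hμk, Real.Gamma_zero]
  have hΓ : Real.Gamma (μ + (k + 1 : ℕ) + 1) = (μ + k + 1) * Real.Gamma (μ + k + 1) := by
    rw [← Real.Gamma_add_one hμk]; push_cast; ring_nf
  by_cases hG : Real.Gamma (μ + k + 1) = 0
  · rw [besselCoeff, besselCoeff, hΓ, hG]
    simp
  rw [besselCoeff, besselCoeff, hΓ, Nat.factorial_succ]
  push_cast
  field_simp
  ring

lemma hasInfiniteRadius_besselCoeff (μ : ℝ) : HasInfiniteRadius (besselCoeff μ) := by
  intro r hr
  obtain ⟨N, hN⟩ := exists_nat_gt (-μ - 1)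
  have hpos : ∀ k ≥ N, 0 < μ + k + 1 := fun k hk => by
    have : (N : ℝ) ≤ k := by exact_mod_cast hk
    linarith
  have hne : ∀ k ≥ N, |besselCoeff μ k| * r ^ k ≠ 0 := fun k hk => by
    have := (Real.Gamma_pos_of_pos (hpos k hk)).ne'
    simp [besselCoeff, this, Nat.factorial_ne_zero, hr.ne',
      (Real.rpow_pos_of_pos two_pos (-μ)).ne']
  have hratio : ∀ k ≥ N, ‖|besselCoeff μ (k + 1)| * r ^ (k + 1)‖ / ‖|besselCoeff μ k| * r ^ k‖
      = r / ((k + 1) * (μ + k + 1)) := fun k hk => by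
    have hkμ : (0 : ℝ) < (k + 1) * (μ + k + 1) := mul_pos (by positivity) (hpos k hk)
    have hsucc : besselCoeff μ (k + 1) = -besselCoeff μ k / ((k + 1) * (μ + k + 1)) := by
      rw [← besselCoeff_succ, mul_div_cancel_left₀ _ hkμ.ne']
    have ha : |besselCoeff μ k| ≠ 0 := left_ne_zero_of_mul (hne k hk)
    rw [Real.norm_of_nonneg (by positivity), Real.norm_of_nonneg (by positivity), hsucc, abs_div,
      abs_neg, abs_of_pos hkμ, pow_succ]
    field_simp
  refine summable_of_ratio_test_tendsto_lt_one zero_lt_one (eventually_atTop.2 ⟨N, hne⟩) ?_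
  refine (tendsto_congr' (eventually_atTop.2 ⟨N, fun k hk => (hratio k hk).symm⟩)).1 ?_
  have hnat := tendsto_natCast_atTop_atTop (R := ℝ)
  exact tendsto_const_nhds.div_atTop ((tendsto_atTop_add_const_right _ 1 hnat).atTop_mul_atTop₀
    (tendsto_atTop_add_const_right _ 1 (tendsto_atTop_add_const_left _ μ hnat)))

lemma hasDerivAt_rpow_mul_powerSum {a : ℕ → ℝ} (ha : HasInfiniteRadius a) (p : ℝ) {z : ℝ}
    (hz : 0 < z) :
    HasDerivAt (fun z => z ^ p * powerSum a (z ^ 2 / 4))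
      (z ^ (p - 1) * powerSum (fun k => (p + 2 * k) * a k) (z ^ 2 / 4)) z := by
  have hsq : HasDerivAt (fun z : ℝ => z ^ 2 / 4) (z / 2) z :=
    ((hasDerivAt_pow 2 z).div_const 4).congr_deriv (by push_cast; ring)
  refine ((Real.hasDerivAt_rpow_const (Or.inl hz.ne')).mul
    ((hasDerivAt_powerSum ha _).comp z hsq)).congr_deriv ?_
  rw [Function.comp_apply, powerSum_affine_mul ha, Real.rpow_sub_one hz.ne']
  field_simp
  ring

noncomputable def sqrtBesselCoeff (μ : ℝ) : ℕ → ℕ → ℝ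
  | 0 => besselCoeff μ
  | m + 1 => fun k => (μ + 1 / 2 - m + 2 * k) * sqrtBesselCoeff μ m k

lemma hasInfiniteRadius_sqrtBesselCoeff (μ : ℝ) : ∀ m, HasInfiniteRadius (sqrtBesselCoeff μ m)
  | 0 => hasInfiniteRadius_besselCoeff μ
  | m + 1 => (hasInfiniteRadius_sqrtBesselCoeff μ m).affine_mul _ 2

lemma sqrt_mul_besselJ_eq (μ : ℝ) {z : ℝ} (hz : 0 < z) :
    √z * besselJ μ z = z ^ (μ + 1 / 2) * powerSum (besselCoeff μ) (z ^ 2 / 4) := by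
  have hsqrt : √z * (z / 2) ^ μ = z ^ (μ + 1 / 2) * 2 ^ (-μ) := by
    rw [Real.sqrt_eq_rpow, Real.div_rpow hz.le zero_le_two, Real.rpow_add hz,
      Real.rpow_neg zero_le_two]
    ring
  rw [besselJ, ← mul_assoc, hsqrt, mul_assoc, powerSum, ← tsum_mul_left]
  congr 1
  refine tsum_congr fun k => ?_
  rw [besselCoeff, pow_mul, div_pow]
  ring

lemma iteratedDeriv_sqrt_mul_besselJ (μ : ℝ) (m : ℕ) {z : ℝ} (hz : 0 < z) :
    iteratedDeriv m (fun z => √z * besselJ μ z) z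
      = z ^ (μ + 1 / 2 - m) * powerSum (sqrtBesselCoeff μ m) (z ^ 2 / 4) := by
  induction m generalizing z with
  | zero => simpa [sqrtBesselCoeff] using sqrt_mul_besselJ_eq μ hz
  | succ m ih =>
    have heq : iteratedDeriv m (fun z => √z * besselJ μ z)
        =ᶠ[𝓝 z] fun z => z ^ (μ + 1 / 2 - m) * powerSum (sqrtBesselCoeff μ m) (z ^ 2 / 4) :=
      eventually_of_mem (Ioi_mem_nhds hz) fun y hy => ih hy
    rw [iteratedDeriv_succ, heq.deriv_eq,
      (hasDerivAt_rpow_mul_powerSum (hasInfiniteRadius_sqrtBesselCoeff μ m) _ hz).deriv,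
      Nat.cast_succ, ← sub_sub]
    rfl

lemma contDiffAt_sqrt_mul_besselJ (μ : ℝ) {z : ℝ} (hz : 0 < z) :
    ContDiffAt ℝ ∞ (fun z => √z * besselJ μ z) z := by
  have heq : (fun z => z ^ (μ + 1 / 2) * powerSum (besselCoeff μ) (z ^ 2 / 4))
      =ᶠ[𝓝 z] fun z => √z * besselJ μ z :=
    eventually_of_mem (Ioi_mem_nhds hz) fun y hy => (sqrt_mul_besselJ_eq μ hy).symm
  refine ContDiffAt.congr_of_eventuallyEq ?_ heq.symm
  exact (Real.contDiffAt_rpow_const_of_ne hz.ne').mul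
    ((contDiff_powerSum (hasInfiniteRadius_besselCoeff μ)).contDiffAt.comp z (by fun_prop))

lemma powerSum_sqrtBesselCoeff_two (μ w : ℝ) :
    powerSum (sqrtBesselCoeff μ 2) w = -(4 * w + (1 / 4 - μ ^ 2)) * powerSum (besselCoeff μ) w := by
  have ha := hasInfiniteRadius_besselCoeff μ
  have hq := hasInfiniteRadius_sqrtBesselCoeff μ 2
  set b : ℕ → ℝ := fun k => sqrtBesselCoeff μ 2 k + (1 / 4 - μ ^ 2) * besselCoeff μ k
  have hb : Summable fun k => b k * w ^ k :=
    ((hq.summable w).add ((ha.summable w).mul_left (1 / 4 - μ ^ 2))).congr fun k => by ring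
  have hb0 : b 0 = 0 := by simp [b, sqrtBesselCoeff]; ring
  have hb_succ : (fun k => b (k + 1)) = fun k => -4 * besselCoeff μ k := by
    funext k
    simp only [b, sqrtBesselCoeff]
    push_cast
    linear_combination 4 * besselCoeff_succ μ k
  have hsum : powerSum b w
      = powerSum (sqrtBesselCoeff μ 2) w + (1 / 4 - μ ^ 2) * powerSum (besselCoeff μ) w := by
    rw [powerSum, powerSum, powerSum, ← tsum_mul_left,
      ← (hq.summable w).tsum_add ((ha.summable w).mul_left _)]
    exact tsum_congr fun k => by ring
  have hneg : powerSum (fun k => -4 * besselCoeff μ k) w = -4 * powerSum (besselCoeff μ) w := by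
    rw [powerSum, powerSum, ← tsum_mul_left]
    exact tsum_congr fun k => by ring
  rw [powerSum_eq_zero_add hb, hb0, hb_succ, hneg] at hsum
  linarith

lemma iteratedDeriv_two_sqrt_mul_besselJ (μ : ℝ) {z : ℝ} (hz : 0 < z) :
    iteratedDeriv 2 (fun z => √z * besselJ μ z) z
      = -(1 + (1 / 4 - μ ^ 2) / z ^ 2) * (√z * besselJ μ z) := by
  rw [iteratedDeriv_sqrt_mul_besselJ μ 2 hz, sqrt_mul_besselJ_eq μ hz, powerSum_sqrtBesselCoeff_two,
    Nat.cast_ofNat, Real.rpow_sub hz, Real.rpow_two]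
  field_simp

lemma sq_add_sq_le_of_hasDerivAt {u u' : ℝ → ℝ} {c : ℝ}
    (hu : ∀ z ≥ 1, HasDerivAt u (u' z) z)
    (hu' : ∀ z ≥ 1, HasDerivAt u' (-(1 + c / z ^ 2) * u z) z) {z : ℝ} (hz : 1 ≤ z) :
    u' z ^ 2 + u z ^ 2 ≤ (u' 1 ^ 2 + u 1 ^ 2) * Real.exp |c| := by
  set F := fun z => (u' z ^ 2 + u z ^ 2) * Real.exp (|c| / z)
  set F' := fun z =>
    -(Real.exp (|c| / z) / z ^ 2) * (2 * c * u z * u' z + |c| * (u' z ^ 2 + u z ^ 2))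
  have hF : ∀ z ≥ 1, HasDerivAt F (F' z) z := by
    intro z hz
    have hz0 : z ≠ 0 := by positivity
    have hexp := (Real.hasDerivAt_exp (|c| / z)).comp z ((hasDerivAt_inv hz0).const_mul |c|)
    refine ((((hu' z hz).pow 2).add ((hu z hz).pow 2)).mul hexp).congr_deriv ?_
    simp only [F', Function.comp_apply, Pi.add_apply, Pi.pow_apply]
    field_simp
    ring
  have hF' : ∀ z, F' z ≤ 0 := by
    intro z
    refine mul_nonpos_of_nonpos_of_nonneg (neg_nonpos.2 (by positivity)) ?_
    rcases le_total 0 c with hc | hc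
    · rw [abs_of_nonneg hc]; nlinarith [sq_nonneg (u z + u' z)]
    · rw [abs_of_nonpos hc]; nlinarith [sq_nonneg (u z - u' z)]
  have hanti : AntitoneOn F (Ici 1) :=
    antitoneOn_of_hasDerivWithinAt_nonpos (convex_Ici 1)
      (fun z hz => (hF z hz).continuousAt.continuousWithinAt)
      (fun z hz => (hF z (interior_subset hz)).hasDerivWithinAt) (fun z _ => hF' z)
  calc u' z ^ 2 + u z ^ 2 ≤ F z :=
        le_mul_of_one_le_right (by positivity) (Real.one_le_exp (by positivity))
    _ ≤ F 1 := hanti (mem_Ici.2 le_rfl) hz hz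
    _ = _ := by simp [F]

lemma isBigO_iteratedDeriv_inv_sq (i : ℕ) :
    iteratedDeriv i (fun y : ℝ => (y ^ 2)⁻¹) =O[𝓟 (Ici 1)] fun _ => (1 : ℝ) := by
  have hzpow : (fun y : ℝ => (y ^ 2)⁻¹) = fun y => y ^ (-2 : ℤ) := by
    funext y
    rw [zpow_neg, zpow_ofNat]
  refine isBigO_principal.2 ⟨|∏ j ∈ Finset.range i, ((-2 : ℤ) - j : ℝ)|, fun z hz => ?_⟩
  rw [hzpow, iteratedDeriv_eq_iterate, iter_deriv_zpow, norm_mul, norm_one, mul_one]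
  refine mul_le_of_le_one_right (norm_nonneg _) ?_
  rw [norm_zpow, Real.norm_of_nonneg (zero_le_one.trans hz)]
  exact zpow_le_one_of_nonpos₀ hz (by omega)

theorem isBigO_iteratedDeriv_of_ode {u : ℝ → ℝ} {c : ℝ} (hu : ContDiffOn ℝ ∞ u (Ioi 0))
    (hode : ∀ z > 0, iteratedDeriv 2 u z = -(1 + c / z ^ 2) * u z) (m : ℕ) :
    iteratedDeriv m u =O[𝓟 (Ici 1)] fun _ => (1 : ℝ) := by
  have hpos : ∀ z ≥ (1 : ℝ), 0 < z := fun z hz => zero_lt_one.trans_le hz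
  have hcd : ∀ (k : ℕ) {z : ℝ}, 0 < z → ContDiffAt ℝ k u z := fun k z hz =>
    (hu.contDiffAt (Ioi_mem_nhds hz)).of_le (mod_cast le_top)
  have hode' : ∀ z > 0, deriv (deriv u) z = -(1 + c / z ^ 2) * u z := fun z hz => by
    rw [← hode z hz, iteratedDeriv_succ, iteratedDeriv_one]
  have hu1 : ∀ z ≥ 1, HasDerivAt u (deriv u z) z := fun z hz =>
    ((hcd 1 (hpos z hz)).differentiableAt one_ne_zero).hasDerivAt
  have hu' : ContDiffOn ℝ 1 (deriv u) (Ioi 0) :=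
    hu.deriv_of_isOpen isOpen_Ioi (WithTop.coe_le_coe.2 le_top)
  have hu2 : ∀ z ≥ 1, HasDerivAt (deriv u) (-(1 + c / z ^ 2) * u z) z := fun z hz => by
    rw [← hode' z (hpos z hz)]
    exact ((hu'.differentiableOn one_ne_zero).differentiableAt
      (Ioi_mem_nhds (hpos z hz))).hasDerivAt
  obtain ⟨K, hK⟩ : ∃ K, ∀ z ≥ 1, deriv u z ^ 2 + u z ^ 2 ≤ K :=
    ⟨_, fun z hz => sq_add_sq_le_of_hasDerivAt hu1 hu2 hz⟩
  have hbdd : ∀ f : ℝ → ℝ, (∀ z ≥ 1, f z ^ 2 ≤ K) → f =O[𝓟 (Ici 1)] fun _ => (1 : ℝ) :=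
    fun f hf => isBigO_principal.2 ⟨√K, fun z hz => by simpa using Real.abs_le_sqrt (hf z hz)⟩
  induction m using Nat.strong_induction_on with
  | _ m ih =>
  obtain _ | _ | k := m
  · exact hbdd _ fun z hz => by
      rw [iteratedDeriv_zero]; nlinarith [hK z hz, sq_nonneg (deriv u z)]
  · exact hbdd _ fun z hz => by
      rw [iteratedDeriv_one]; nlinarith [hK z hz, sq_nonneg (u z)]
  have hleibniz : ∀ z ≥ 1, iteratedDeriv (k + 2) u z = -(iteratedDeriv k u z + c *
      ∑ i ∈ Finset.range (k + 1), k.choose i *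
        (iteratedDeriv i (fun y : ℝ => (y ^ 2)⁻¹) z * iteratedDeriv (k - i) u z)) := by
    intro z hz
    have hz0 := hpos z hz
    have hinv : ContDiffAt ℝ k (fun y : ℝ => (y ^ 2)⁻¹) z :=
      (contDiffAt_id.pow 2).inv (by simp [hz0.ne'])
    have heq : deriv (deriv u) =ᶠ[𝓝 z] fun y => -(u y + c * ((y ^ 2)⁻¹ * u y)) :=
      eventually_of_mem (Ioi_mem_nhds hz0) fun y hy => by rw [hode' y hy]; ring
    rw [iteratedDeriv_succ', iteratedDeriv_succ', heq.iteratedDeriv_eq, iteratedDeriv_fun_neg,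
      iteratedDeriv_fun_add (hcd k hz0) (contDiffAt_const.mul (hinv.mul (hcd k hz0))),
      iteratedDeriv_const_mul_field, iteratedDeriv_fun_mul hinv (hcd k hz0)]
    simp only [mul_assoc]
  refine IsBigO.congr' ?_ (eventually_principal.2 fun z hz => (hleibniz z hz).symm) .rfl
  refine ((ih k (by omega)).add ((IsBigO.fun_sum fun i hi => ?_).const_mul_left c)).neg_left
  simpa only [mul_one] using ((isBigO_iteratedDeriv_inv_sq i).mul
    (ih (k - i) (by omega))).const_mul_left (k.choose i : ℝ)

lemma isBigO_iteratedDeriv_sqrt_mul_besselJ_Ioc (μ : ℝ) {n : ℕ} (hn : (n : ℝ) < μ + 1 / 2) :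
    iteratedDeriv n (fun z => √z * besselJ μ z) =O[𝓟 (Ioc 0 1)] fun _ => (1 : ℝ) := by
  have hpow : (fun z : ℝ => z ^ (μ + 1 / 2 - n)) =O[𝓟 (Ioc 0 1)] fun _ => (1 : ℝ) := by
    refine isBigO_principal.2 ⟨1, fun z hz => ?_⟩
    rw [norm_one, mul_one, Real.norm_of_nonneg (Real.rpow_nonneg hz.1.le _)]
    exact Real.rpow_le_one hz.1.le hz.2 (by linarith)
  have hseries : (fun z : ℝ => powerSum (sqrtBesselCoeff μ n) (z ^ 2 / 4)) =O[𝓟 (Ioc 0 1)]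
      fun _ => (1 : ℝ) :=
    (((contDiff_powerSum (hasInfiniteRadius_sqrtBesselCoeff μ n)).continuous.comp
      (by fun_prop)).continuousOn.isBigO_principal isCompact_Icc (by simp)).mono
      (principal_mono.2 Ioc_subset_Icc_self)
  refine (hpow.mul hseries).congr' ?_ (by simp)
  exact eventually_principal.2 fun z hz => (iteratedDeriv_sqrt_mul_besselJ μ n hz.1).symm

lemma isBigO_iteratedDeriv_sqrt_mul_besselJ_Ici (μ : ℝ) (n : ℕ) :
    iteratedDeriv n (fun z => √z * besselJ μ z) =O[𝓟 (Ici 1)] fun _ => (1 : ℝ) :=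
  isBigO_iteratedDeriv_of_ode (fun _ hz => (contDiffAt_sqrt_mul_besselJ μ hz).contDiffWithinAt)
    (fun _ hz => iteratedDeriv_two_sqrt_mul_besselJ μ hz) n

theorem iteratedDeriv_sqrt_besselJ_bounded_general
    (μ : ℝ) (n : ℕ) (hn : (n : ℝ) < μ + 1/2) :
    ∃ C : ℝ, ∀ z > (0 : ℝ),
      ‖iteratedDeriv n (fun z : ℝ => Real.sqrt z * besselJ μ z) z‖ ≤ C := by
  have h := (isBigO_iteratedDeriv_sqrt_mul_besselJ_Ioc μ hn).sup
    (isBigO_iteratedDeriv_sqrt_mul_besselJ_Ici μ n)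
  rw [sup_principal, Ioc_union_Ici_eq_Ioi zero_lt_one] at h
  obtain ⟨C, hC⟩ := isBigO_principal.1 h
  exact ⟨C, fun z hz => by simpa using hC z hz⟩

/-- For `μ ≥ -1/2` and `n ∈ ℕ` with `n < μ + 1/2`, the `n`-th derivative of
`z ↦ √z J_μ(z)` is bounded on `(0,∞)`. -/
theorem iteratedDeriv_sqrt_besselJ_bounded
    (μ : ℝ) (n : ℕ) (hμ : -1/2 ≤ μ) (hn : (n : ℝ) < μ + 1/2) :
    ∃ C : ℝ, ∀ z > (0 : ℝ),
      ‖iteratedDeriv n (fun z : ℝ => Real.sqrt z * besselJ μ z) z‖ ≤ C :=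
  iteratedDeriv_sqrt_besselJ_bounded_general μ n hn
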